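/- Let k ≥ 2, d ≥ 2, let G₁,…,G_k be finite cyclic groups each containing an element of order d (so d divides each |G_i|), and let u_i ∈ G_i have order d. Then the quotient group G = (G₁ × ⋯ × G_k)/⟨(u₁,…,u_k)⟩ contains an element of order lcm(|G₁|,…,|G_k|). -/

import Mathlib

/-!
If `(g_i)^n` lies in `⟨u⟩` for an element `g` supported on the single coordinate `i`, say
`(g_i)^n = u^t` there, then `u_j^t = 1` at any other coordinate `j`; when `ord u_i ∣ ord u_j`
this forces `u_i^t = 1`, i.e. `(g_i)^n = 1`. So killing the diagonal cyclic subgroup `⟨u⟩` does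
not lower the exponent of `∏ G_i`, which for cyclic factors is `lcm |G_i|`; a finite abelian
group has an element whose order is its exponent.
-/

open Monoid

theorem pow_eq_one_of_mulSingle_pow_mem_zpowers {ι : Type*} [DecidableEq ι] {G : ι → Type*}
    [∀ i, Group (G i)] {u : ∀ i, G i} {i j : ι} (hji : j ≠ i)
    (hu : orderOf (u i) ∣ orderOf (u j)) {g : G i} {n : ℕ}
    (h : Pi.mulSingle i g ^ n ∈ Subgroup.zpowers u) : g ^ n = 1 := by
  obtain ⟨t, ht⟩ := Subgroup.mem_zpowers_iff.mp h
  have huj : u j ^ t = 1 := by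
    simpa [Pi.mulSingle_eq_of_ne hji] using congr_fun ht j
  have hui : u i ^ t = 1 :=
    orderOf_dvd_iff_zpow_eq_one.mp ((Int.natCast_dvd_natCast.mpr hu).trans
      (orderOf_dvd_iff_zpow_eq_one.mpr huj))
  simpa [hui] using (congr_fun ht i).symm

theorem exponent_pi_quotient_zpowers {ι : Type*} {G : ι → Type*} [∀ i, CommGroup (G i)]
    (u : ∀ i, G i) (hu : ∀ i, ∃ j ≠ i, orderOf (u i) ∣ orderOf (u j)) :
    exponent ((∀ i, G i) ⧸ Subgroup.zpowers u) = exponent (∀ i, G i) := by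
  classical
  refine dvd_antisymm (Group.exponent_quotient_dvd _) (exponent_dvd_of_forall_pow_eq_one ?_)
  intro g
  funext i
  obtain ⟨j, hji, hdvd⟩ := hu i
  refine pow_eq_one_of_mulSingle_pow_mem_zpowers hji hdvd ?_
  rw [← QuotientGroup.eq_one_iff, QuotientGroup.mk_pow]
  exact pow_exponent_eq_one _

theorem stmt_11_general (k d : ℕ) (hk : 2 ≤ k)
    (G : Fin k → Type*) [∀ i, CommGroup (G i)] [∀ i, Fintype (G i)]
    [∀ i, IsCyclic (G i)]
    (u : ∀ i, G i) (hu : ∀ i, orderOf (u i) = d) :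
    ∃ x : (∀ i, G i) ⧸ Subgroup.zpowers u,
      orderOf x = Finset.univ.lcm (fun i : Fin k => Fintype.card (G i)) := by
  have : Nontrivial (Fin k) := Fin.nontrivial_iff_two_le.mpr hk
  have hexp : exponent ((∀ i, G i) ⧸ Subgroup.zpowers u) =
      Finset.univ.lcm (fun i : Fin k => Fintype.card (G i)) := by
    rw [exponent_pi_quotient_zpowers u fun i => (exists_ne i).imp fun j hj => ⟨hj, by rw [hu, hu]⟩,
      exponent_pi]
    simp only [IsCyclic.exponent_eq_card, Nat.card_eq_fintype_card]
  rw [← hexp]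
  exact exists_orderOf_eq_exponent ExponentExists.of_finite

/-- For finite cyclic groups `G₁,…,G_k` and elements `u_i ∈ G_i` of order `d`,
the quotient `(G₁ × ⋯ × G_k)/⟨(u₁,…,u_k)⟩` contains an element of order
`lcm(|G₁|,…,|G_k|)`. -/
theorem stmt_11 (k d : ℕ) (hk : 2 ≤ k) (hd : 2 ≤ d)
    (G : Fin k → Type*) [∀ i, CommGroup (G i)] [∀ i, Fintype (G i)]
    [∀ i, IsCyclic (G i)]
    (u : ∀ i, G i) (hu : ∀ i, orderOf (u i) = d) :
    ∃ x : (∀ i, G i) ⧸ Subgroup.zpowers u,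
      orderOf x = Finset.univ.lcm (fun i : Fin k => Fintype.card (G i)) :=
  stmt_11_general k d hk G u hu
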